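/- Let a < t₀ < b and let H : [a,b] → ℝ be C¹ with H(a) = H(b) = 0, H ≥ 0, H(t₀) = 1 the unique maximum, H increasing on [a,t₀] and decreasing on [t₀,b]. Then the measures μ_α(dt) = ((α+1)/2) H(t)^α |H'(t)| dt on [a,b] converge weakly to the Dirac measure δ_{t₀} as α → ∞; that is, for every continuous f : [a,b] → ℝ, ((α+1)/2) ∫_a^b f(t) H(t)^α |H'(t)| dt → f(t₀) as α → ∞. -/

import Mathlib

/-!
The kernel `((α + 1) / 2) H^α |H'|` is a probability density for `α ≥ 0`: on `[a, t₀]` we have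
`H' ≥ 0` and `H^α H'` is the derivative of `H^(α+1) / (α + 1)`, which runs from `0` to `1`;
symmetrically on `[t₀, b]`. Outside any neighbourhood of `t₀`, compactness and uniqueness of the
maximum give `H ≤ θ < 1`, so the kernel is `O((α + 1) θ^α)` there and tends to `0` uniformly.
These are the hypotheses of the general convergence theorem for integrals against peak functions.
-/

open Set MeasureTheory Filter Topology Real

noncomputable def peakKernel {X : Type*} (H H' : X → ℝ) (α : ℝ) (x : X) : ℝ :=
  (α + 1) / 2 * (H x ^ α * |H' x|)

theorem peakKernel_nonneg {X : Type*} {H H' : X → ℝ} {α : ℝ} {x : X} (hα : -1 ≤ α)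
    (hH : 0 ≤ H x) :
    0 ≤ peakKernel H H' α x := by
  have : 0 ≤ α + 1 := by linarith
  unfold peakKernel; positivity

theorem ContinuousOn.peakKernel {X : Type*} [TopologicalSpace X] {K : Set X} {H H' : X → ℝ}
    {α : ℝ} (hα : 0 ≤ α) (hH : ContinuousOn H K) (hH' : ContinuousOn H' K) :
    ContinuousOn (peakKernel H H' α) K :=
  continuousOn_const.mul ((hH.rpow_const fun _ _ => Or.inr hα).mul hH'.abs)

theorem tendsto_add_one_mul_rpow_atTop {θ : ℝ} (h0 : 0 < θ) (h1 : θ < 1) :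
    Tendsto (fun α : ℝ => (α + 1) * θ ^ α) atTop (𝓝 0) := by
  have hb : 0 < -log θ := neg_pos.2 (log_neg h0 h1)
  have h := (tendsto_rpow_mul_exp_neg_mul_atTop_nhds_zero 1 _ hb).add
    (tendsto_rpow_mul_exp_neg_mul_atTop_nhds_zero 0 _ hb)
  rw [add_zero] at h
  refine h.congr fun α => ?_
  rw [rpow_one, rpow_zero, rpow_def_of_pos h0, neg_neg]
  ring

theorem IsCompact.exists_lt_forall_le {X : Type*} [TopologicalSpace X] {K : Set X}
    (hK : IsCompact K) {f : X → ℝ} (hf : ContinuousOn f K) {c : ℝ} (h : ∀ x ∈ K, f x < c) :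
    ∃ θ < c, ∀ x ∈ K, f x ≤ θ := by
  obtain ⟨θ, hθc, hθ⟩ := hK.exists_forall_le' hf.neg (a := -c) fun x hx => neg_lt_neg (h x hx)
  exact ⟨-θ, by linarith, fun x hx => le_neg_of_le_neg (hθ x hx)⟩

theorem tendstoUniformlyOn_peakKernel {X : Type*} [TopologicalSpace X] {K : Set X}
    (hK : IsCompact K) {H H' : X → ℝ} (hH : ContinuousOn H K) (hH' : ContinuousOn H' K)
    (hH0 : ∀ x ∈ K, 0 ≤ H x) (hH1 : ∀ x ∈ K, H x < 1) :
    TendstoUniformlyOn (peakKernel H H') 0 atTop K := by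
  obtain ⟨θ, hθ1, hHθ⟩ := hK.exists_lt_forall_le hH hH1
  obtain ⟨M, hM⟩ := hK.exists_bound_of_continuousOn hH'
  set θ' := max θ (1 / 2)
  have hθ'0 : 0 < θ' := lt_max_of_lt_right one_half_pos
  have hθ'1 : θ' < 1 := max_lt hθ1 one_half_lt_one
  have hbound : Tendsto (fun α : ℝ => (α + 1) * θ' ^ α * M / 2) atTop (𝓝 0) := by
    simpa using ((tendsto_add_one_mul_rpow_atTop hθ'0 hθ'1).mul_const M).div_const 2
  rw [SeminormedAddGroup.tendstoUniformlyOn_zero]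
  intro ε hε
  filter_upwards [hbound.eventually (gt_mem_nhds hε), eventually_ge_atTop 0] with α hαε hα x hx
  refine lt_of_le_of_lt ?_ hαε
  have hpow : H x ^ α ≤ θ' ^ α := rpow_le_rpow (hH0 x hx) ((hHθ x hx).trans (le_max_left _ _)) hα
  have hM' : |H' x| ≤ M := hM x hx
  rw [peakKernel, Real.norm_of_nonneg (by have := hH0 x hx; positivity)]
  calc (α + 1) / 2 * (H x ^ α * |H' x|) ≤ (α + 1) / 2 * (θ' ^ α * M) := by gcongr
    _ = (α + 1) * θ' ^ α * M / 2 := by ring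

theorem integral_rpow_mul_deriv {H H' : ℝ → ℝ} {u v α : ℝ} (huv : u ≤ v) (hα : 0 ≤ α)
    (hH : ∀ t ∈ Icc u v, HasDerivWithinAt H (H' t) (Icc u v) t)
    (hH' : ContinuousOn H' (Icc u v)) :
    ∫ t in u..v, H t ^ α * H' t = (H v ^ (α + 1) - H u ^ (α + 1)) / (α + 1) := by
  have hHc : ContinuousOn H (Icc u v) := fun t ht => (hH t ht).continuousWithinAt
  have hα1 : α + 1 ≠ 0 := by positivity
  rw [eq_div_iff hα1, ← intervalIntegral.integral_mul_const]
  refine intervalIntegral.integral_eq_sub_of_hasDerivAt_of_le huv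
    (hHc.rpow_const fun _ _ => Or.inr (by linarith)) (fun t ht => ?_) ?_
  · have := ((hH t (Ioo_subset_Icc_self ht)).hasDerivAt (Icc_mem_nhds ht.1 ht.2)).rpow_const
      (p := α + 1) (Or.inr (by linarith))
    refine this.congr_deriv ?_
    rw [add_sub_cancel_right]
    ring
  · refine ContinuousOn.intervalIntegrable ?_
    rw [uIcc_of_le huv]
    exact ((hHc.rpow_const fun _ _ => Or.inr hα).mul hH').mul continuousOn_const

theorem HasDerivWithinAt.nonneg_of_monotoneOn_Icc {f : ℝ → ℝ} {f' u v x : ℝ} (huv : u < v)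
    (hx : x ∈ Icc u v) (hf : HasDerivWithinAt f f' (Icc u v) x) (hmono : MonotoneOn f (Icc u v)) :
    0 ≤ f' :=
  hf.derivWithin (uniqueDiffOn_Icc huv x hx) ▸ hmono.derivWithin_nonneg

theorem HasDerivWithinAt.nonpos_of_antitoneOn_Icc {f : ℝ → ℝ} {f' u v x : ℝ} (huv : u < v)
    (hx : x ∈ Icc u v) (hf : HasDerivWithinAt f f' (Icc u v) x) (hanti : AntitoneOn f (Icc u v)) :
    f' ≤ 0 :=
  hf.derivWithin (uniqueDiffOn_Icc huv x hx) ▸ hanti.derivWithin_nonpos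

theorem integral_peakKernel {H H' : ℝ → ℝ} {a b t₀ α : ℝ} (ht₀ : t₀ ∈ Ioo a b) (hα : 0 ≤ α)
    (hderiv : ∀ t ∈ Icc a b, HasDerivWithinAt H (H' t) (Icc a b) t)
    (hH' : ContinuousOn H' (Icc a b)) (ha : H a = 0) (hb : H b = 0) (hmax : H t₀ = 1)
    (hmono : MonotoneOn H (Icc a t₀)) (hanti : AntitoneOn H (Icc t₀ b)) :
    ∫ t in a..b, peakKernel H H' α t = 1 := by
  have hsubL : Icc a t₀ ⊆ Icc a b := Icc_subset_Icc_right ht₀.2.le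
  have hsubR : Icc t₀ b ⊆ Icc a b := Icc_subset_Icc_left ht₀.1.le
  have hderivL (t) (ht : t ∈ Icc a t₀) : HasDerivWithinAt H (H' t) (Icc a t₀) t :=
    (hderiv t (hsubL ht)).mono hsubL
  have hderivR (t) (ht : t ∈ Icc t₀ b) : HasDerivWithinAt H (H' t) (Icc t₀ b) t :=
    (hderiv t (hsubR ht)).mono hsubR
  have hα1 : α + 1 ≠ 0 := by positivity
  have hzero : (0 : ℝ) ^ (α + 1) = 0 := zero_rpow hα1
  have hleft : ∫ t in a..t₀, H t ^ α * |H' t| = 1 / (α + 1) := by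
    rw [intervalIntegral.integral_congr (g := fun t => H t ^ α * H' t) fun t ht => ?_,
      integral_rpow_mul_deriv ht₀.1.le hα hderivL (hH'.mono hsubL), ha, hmax, one_rpow, hzero,
      sub_zero]
    rw [uIcc_of_le ht₀.1.le] at ht
    rw [abs_of_nonneg ((hderivL t ht).nonneg_of_monotoneOn_Icc ht₀.1 ht hmono)]
  have hright : ∫ t in t₀..b, H t ^ α * |H' t| = 1 / (α + 1) := by
    rw [intervalIntegral.integral_congr (g := fun t => -(H t ^ α * H' t)) fun t ht => ?_,
      intervalIntegral.integral_neg, integral_rpow_mul_deriv ht₀.2.le hα hderivR (hH'.mono hsubR),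
      hb, hmax, one_rpow, hzero, zero_sub, neg_div, neg_neg]
    rw [uIcc_of_le ht₀.2.le] at ht
    rw [abs_of_nonpos ((hderivR t ht).nonpos_of_antitoneOn_Icc ht₀.2 ht hanti), mul_neg]
  have hHc : ContinuousOn H (Icc a b) := fun t ht => (hderiv t ht).continuousWithinAt
  have hint : ContinuousOn (fun t => H t ^ α * |H' t|) (Icc a b) :=
    (hHc.rpow_const fun _ _ => Or.inr hα).mul hH'.abs
  have hintL : IntervalIntegrable (fun t => H t ^ α * |H' t|) volume a t₀ :=
    (hint.mono hsubL).intervalIntegrable_of_Icc ht₀.1.le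
  have hintR : IntervalIntegrable (fun t => H t ^ α * |H' t|) volume t₀ b :=
    (hint.mono hsubR).intervalIntegrable_of_Icc ht₀.2.le
  simp only [peakKernel]
  rw [intervalIntegral.integral_const_mul, ← intervalIntegral.integral_add_adjacent_intervals hintL
    hintR, hleft, hright]
  field_simp
  ring

theorem setIntegral_peakKernel_smul {H H' f : ℝ → ℝ} {a b α : ℝ} (hab : a ≤ b) :
    ∫ t in Icc a b, peakKernel H H' α t • f t =
      (α + 1) / 2 * ∫ t in a..b, f t * (H t ^ α * |H' t|) := by
  rw [integral_Icc_eq_integral_Ioc, ← intervalIntegral.integral_of_le hab,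
    ← intervalIntegral.integral_const_mul]
  simp only [peakKernel, smul_eq_mul]
  congr 1 with t
  ring

theorem stmt_13_general (H H' : ℝ → ℝ) (a b t₀ : ℝ)
    (ht₀ : t₀ ∈ Ioo a b)
    (hderiv : ∀ t ∈ Icc a b, HasDerivWithinAt H (H' t) (Icc a b) t)
    (hH'cont : ContinuousOn H' (Icc a b))
    (ha : H a = 0) (hb : H b = 0)
    (hpos : ∀ t ∈ Icc a b, 0 ≤ H t)
    (hmax : H t₀ = 1)
    (huniq : ∀ t ∈ Icc a b, H t = 1 → t = t₀)
    (hmono : MonotoneOn H (Icc a t₀))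
    (hanti : AntitoneOn H (Icc t₀ b)) :
    ∀ f : ℝ → ℝ, ContinuousOn f (Icc a b) →
      Tendsto (fun α : ℝ => ((α + 1) / 2) * ∫ t in a..b, f t * (H t ^ α * |H' t|))
        atTop (nhds (f t₀)) := by
  intro f hf
  have hab : a ≤ b := (ht₀.1.trans ht₀.2).le
  have hHcont : ContinuousOn H (Icc a b) := fun t ht => (hderiv t ht).continuousWithinAt
  have hH_le (t) (ht : t ∈ Icc a b) : H t ≤ 1 :=
    hmax ▸ isMaxOn_iff.1 (isMaxOn_Icc_of_mono_anti hmono hanti) t ht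
  have hdecay (u : Set ℝ) (hu : IsOpen u) (ht₀u : t₀ ∈ u) :
      TendstoUniformlyOn (peakKernel H H') 0 atTop (Icc a b \ u) :=
    tendstoUniformlyOn_peakKernel (isCompact_Icc.diff hu) (hHcont.mono sdiff_subset)
      (hH'cont.mono sdiff_subset) (fun t ht => hpos t ht.1)
      (fun t ht => (hH_le t ht.1).lt_of_ne fun h => ht.2 (huniq t ht.1 h ▸ ht₀u))
  have hmass : Tendsto (fun α => ∫ t in Icc a b, peakKernel H H' α t) atTop (𝓝 1) := by
    refine tendsto_const_nhds.congr' ?_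
    filter_upwards [eventually_ge_atTop 0] with α hα
    rw [integral_Icc_eq_integral_Ioc, ← intervalIntegral.integral_of_le hab,
      integral_peakKernel ht₀ hα hderiv hH'cont ha hb hmax hmono hanti]
  have hpeak := tendsto_setIntegral_peak_smul_of_integrableOn_of_tendsto measurableSet_Icc
    measurableSet_Icc subset_rfl self_mem_nhdsWithin measure_Icc_lt_top.ne
    (eventually_ge_atTop 0 |>.mono fun α hα t ht => peakKernel_nonneg (by linarith) (hpos t ht))
    hdecay hmass
    (eventually_ge_atTop 0 |>.mono fun α hα =>
      (ContinuousOn.peakKernel hα hHcont hH'cont).aestronglyMeasurable measurableSet_Icc)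
    (hf.integrableOn_Icc) (hf t₀ (Ioo_subset_Icc_self ht₀))
  exact hpeak.congr fun α => setIntegral_peakKernel_smul hab

theorem stmt_13 (H H' : ℝ → ℝ) (a b t₀ : ℝ) (hab : a < b)
    (ht₀ : t₀ ∈ Ioo a b)
    (hderiv : ∀ t ∈ Icc a b, HasDerivWithinAt H (H' t) (Icc a b) t)
    (hH'cont : ContinuousOn H' (Icc a b))
    (ha : H a = 0) (hb : H b = 0)
    (hpos : ∀ t ∈ Icc a b, 0 ≤ H t)
    (hmax : H t₀ = 1)
    (huniq : ∀ t ∈ Icc a b, H t = 1 → t = t₀)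
    (hmono : MonotoneOn H (Icc a t₀))
    (hanti : AntitoneOn H (Icc t₀ b)) :
    ∀ f : ℝ → ℝ, ContinuousOn f (Icc a b) →
      Tendsto (fun α : ℝ => ((α + 1) / 2) * ∫ t in a..b, f t * (H t ^ α * |H' t|))
        atTop (nhds (f t₀)) :=
  stmt_13_general H H' a b t₀ ht₀ hderiv hH'cont ha hb hpos hmax huniq hmono hanti
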